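/- (Reuter's Theorem) Let F₁ and F₀ be continuous, strictly increasing CDFs with F₁(y) < F₀(y) for all y in the interior of the union of their supports (strict stochastic dominance). Then there exists a strictly increasing function g : ℝ → ℝ and a constant τ such that for all p ∈ (0,1), g(F₁⁻¹(p)) - g(F₀⁻¹(p)) = τ; equivalently, the CDFs of g(Y(1)) and g(Y(0)) are parallel (a constant horizontal shift apart), where Y(1) ~ F₁ and Y(0) ~ F₀. -/

import Mathlib

open Set Function

/-!
The map `φ = F₀⁻¹ ∘ F₁` is an order automorphism of `ℝ` with `φ y < y`, and the quantile
identity says `g ∘ φ = g - τ`: it suffices to solve Abel's equation `g ∘ φ = g - 1` with `g`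
strictly increasing. Since `φ` has no fixed point, every orbit `k ↦ φ^k y` is unbounded in both
directions, so it enters the fundamental domain `[φ 0, 0)` at a unique time `m y`; then
`g y = m y + (φ^(m y) y - φ 0) / (0 - φ 0)` works.
-/

theorem StrictMono.exists_orderIso_comp_eq {α β : Type*} [LinearOrder α] [Preorder β]
    {F G : α → β} (hF : StrictMono F) (hG : StrictMono G) (h : range F = range G) :
    ∃ φ : α ≃o α, ∀ x, G (φ x) = F x :=
  ⟨(hF.orderIso F).trans ((OrderIso.setCongr _ _ h).trans (hG.orderIso G).symm), fun x =>
    congrArg Subtype.val ((hG.orderIso G).apply_symm_apply ⟨F x, h ▸ mem_range_self x⟩)⟩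

theorem Antitone.exists_forall_lt_iff_le {α : Type*} [LinearOrder α] {u : ℤ → α}
    (hu : Antitone u) (hbot : ¬BddBelow (range u)) (htop : ¬BddAbove (range u)) (a : α) :
    ∃ n, ∀ k, u k < a ↔ n ≤ k := by
  obtain ⟨_, ⟨l, rfl⟩, hl⟩ := not_bddBelow_iff.mp hbot a
  obtain ⟨_, ⟨b, rfl⟩, hb⟩ := not_bddAbove_iff.mp htop a
  have hbound : ∀ k, u k < a → b ≤ k := fun k hk =>
    le_of_lt (lt_of_not_ge fun hkb => (hu hkb).not_gt (hk.trans hb))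
  obtain ⟨n, hn, hmin⟩ := Int.exists_least_of_bdd ⟨b, hbound⟩ ⟨l, hl⟩
  exact ⟨n, fun k => ⟨hmin k, fun hnk => (hu hnk).trans_lt hn⟩⟩

theorem strictMono_intCast_add_of_mem_Ico {α : Type*} [Preorder α] {m : α → ℤ} {h : α → ℝ}
    (hm : Monotone m) (h01 : ∀ x, h x ∈ Ico (0 : ℝ) 1)
    (hh : ∀ x y, m x = m y → x < y → h x < h y) : StrictMono fun x => (m x : ℝ) + h x := by
  intro x y hxy
  rcases (hm hxy.le).lt_or_eq with hlt | heq
  · have : (m x : ℝ) + 1 ≤ m y := by exact_mod_cast hlt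
    linarith [(h01 x).2, (h01 y).1]
  · simp only [heq, add_lt_add_iff_left]
    exact hh x y heq hxy

namespace OrderIso

variable {α : Type*}

theorem zpow_add_one_apply [LE α] (f : α ≃o α) (k : ℤ) (x : α) :
    (f ^ (k + 1)) x = (f ^ k) (f x) := by
  rw [zpow_add_one]; rfl

theorem zpow_add_one_apply' [LE α] (f : α ≃o α) (k : ℤ) (x : α) :
    (f ^ (k + 1)) x = f ((f ^ k) x) := by
  rw [add_comm, zpow_one_add]; rfl

variable [ConditionallyCompleteLinearOrder α] {f : α ≃o α}

theorem antitone_zpow_apply (hf : ∀ x, f x < x) (x : α) : Antitone fun k : ℤ => (f ^ k) x :=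
  antitone_int_of_succ_le fun k => (zpow_add_one_apply' f k x).trans_le (hf _).le

theorem not_bddBelow_range_zpow_apply (hf : ∀ x, f x < x) (x : α) :
    ¬BddBelow (range fun k : ℤ => (f ^ k) x) := by
  intro hbdd
  set L := ⨅ k : ℤ, (f ^ k) x
  have hL : L < f.symm L := by simpa using hf (f.symm L)
  obtain ⟨k, hk⟩ := exists_lt_of_ciInf_lt hL
  have : (f ^ (k + 1)) x < L := by
    rw [zpow_add_one_apply']
    simpa using f.strictMono hk
  exact this.not_ge (ciInf_le hbdd (k + 1))

theorem not_bddAbove_range_zpow_apply (hf : ∀ x, f x < x) (x : α) :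
    ¬BddAbove (range fun k : ℤ => (f ^ k) x) := by
  intro hbdd
  set L := ⨆ k : ℤ, (f ^ k) x
  obtain ⟨k, hk⟩ := exists_lt_of_lt_ciSup (hf L)
  rw [← sub_add_cancel k 1, zpow_add_one_apply', f.lt_iff_lt] at hk
  exact hk.not_ge (le_ciSup hbdd (k - 1))

theorem exists_monotone_zpow_apply_mem_Ico (hf : ∀ x, f x < x) (a : α) :
    ∃ m : α → ℤ, Monotone m ∧ (∀ x, m (f x) = m x - 1) ∧ ∀ x, (f ^ m x) x ∈ Ico (f a) a := by
  choose m hm using fun x => (antitone_zpow_apply hf x).exists_forall_lt_iff_le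
    (not_bddBelow_range_zpow_apply hf x) (not_bddAbove_range_zpow_apply hf x) a
  have hlt : ∀ x, (f ^ m x) x < a := fun x => (hm x _).mpr le_rfl
  refine ⟨m, fun x y hxy => (hm x _).mp (((f ^ m y).monotone hxy).trans_lt (hlt y)), fun x => ?_,
    fun x => ⟨?_, hlt x⟩⟩
  · apply le_antisymm
    · rw [← hm, ← zpow_add_one_apply, sub_add_cancel]
      exact hlt x
    · rw [sub_le_iff_le_add, ← hm, zpow_add_one_apply]
      exact hlt (f x)
  · have : a ≤ (f ^ (m x - 1)) x := not_lt.mp fun h => by linarith [(hm x _).mp h]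
    rw [← sub_add_cancel (m x) 1, zpow_add_one_apply']
    exact f.monotone this

end OrderIso

theorem exists_strictMono_comp_eq_sub_one (f : ℝ ≃o ℝ) (hf : ∀ x, f x < x) :
    ∃ g : ℝ → ℝ, StrictMono g ∧ ∀ x, g (f x) = g x - 1 := by
  obtain ⟨m, hm, hmf, hmem⟩ := OrderIso.exists_monotone_zpow_apply_mem_Ico hf 0
  have hc : 0 < 0 - f 0 := sub_pos.mpr (hf 0)
  refine ⟨fun x => m x + ((f ^ m x) x - f 0) / (0 - f 0),
    strictMono_intCast_add_of_mem_Ico hm (fun x => ?_) (fun x y hmxy hxy => ?_), fun x => ?_⟩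
  · rw [mem_Ico, le_div_iff₀ hc, div_lt_one hc]
    obtain ⟨hlo, hhi⟩ := hmem x
    constructor <;> linarith
  · rw [hmxy]
    gcongr
  · dsimp only
    rw [hmf, ← OrderIso.zpow_add_one_apply, sub_add_cancel]
    push_cast
    ring

theorem stmt3_general (F1 F0 : ℝ → ℝ)
    (hF1m : StrictMono F1) (hF1r : range F1 = Ioo 0 1)
    (hF0m : StrictMono F0) (hF0r : range F0 = Ioo 0 1)
    (hdom : ∀ y, F1 y < F0 y) :
    ∃ g : ℝ → ℝ, StrictMono g ∧
      ∃ τ : ℝ, ∀ p ∈ Ioo (0:ℝ) 1, g (invFun F1 p) - g (invFun F0 p) = τ := by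
  obtain ⟨φ, hφ⟩ := hF1m.exists_orderIso_comp_eq hF0m (hF1r.trans hF0r.symm)
  have hφlt : ∀ y, φ y < y := fun y => hF0m.lt_iff_lt.mp ((hφ y).trans_lt (hdom y))
  obtain ⟨g, hg, hgφ⟩ := exists_strictMono_comp_eq_sub_one φ hφlt
  refine ⟨g, hg, 1, fun p hp => ?_⟩
  have hquantile : φ (invFun F1 p) = invFun F0 p := hF0m.injective <| by
    rw [hφ, invFun_eq (hF1r ▸ hp : p ∈ range F1), invFun_eq (hF0r ▸ hp : p ∈ range F0)]
  rw [← hquantile, hgφ]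
  ring

/-- Reuter's Theorem: if `F₁`, `F₀` are continuous, strictly increasing CDFs
with strict stochastic dominance `F₁ y < F₀ y` everywhere, then there is a strictly
increasing transformation `g` and a constant `τ` such that the quantile functions of the
transformed distributions differ by `τ` at every `p ∈ (0,1)`, i.e. the transformed CDFs
are parallel (a constant shift apart). -/
theorem stmt3 (F1 F0 : ℝ → ℝ)
    (hF1c : Continuous F1) (hF1m : StrictMono F1) (hF1r : range F1 = Ioo 0 1)
    (hF0c : Continuous F0) (hF0m : StrictMono F0) (hF0r : range F0 = Ioo 0 1)
    (hdom : ∀ y, F1 y < F0 y) :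
    ∃ g : ℝ → ℝ, StrictMono g ∧
      ∃ τ : ℝ, ∀ p ∈ Ioo (0:ℝ) 1, g (invFun F1 p) - g (invFun F0 p) = τ :=
  stmt3_general F1 F0 hF1m hF1r hF0m hF0r hdom
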